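/- Let T = (S, Σ, κ) be a stochastic transition system and B ∈ Σ. If there exists p > 0 such that for every state s ∈ S ∖ B̃ (i.e., every state from which B is reached with positive probability), Prob_{δ_s}(F B) ≥ p, then T is decisive with respect to B. -/

import Mathlib

open MeasureTheory ProbabilityTheory Filter Set ENNReal

namespace STS

variable {S : Type*} [MeasurableSpace S]

/-- The finite-dimensional distributions of the Markov chain with initial distribution `μ`
and transition kernel `κ`: `finDist κ μ n` is the joint law of the first `n+1` states. -/
noncomputable def finDist (κ : Kernel S S) (μ : Measure S) : (n : ℕ) → Measure (Fin (n + 1) → S)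
  | 0 => μ.map (fun s => fun _ => s)
  | n + 1 => (finDist κ μ n).bind (fun x => (κ (x (Fin.last n))).map (Fin.snoc x))

/-- `P` assigns to each initial probability distribution `μ` the probability measure `Prob_μ`
on the space of runs `ℕ → S` (given by the Ionescu–Tulcea theorem), i.e. the unique probability
measure under which the coordinate process is a Markov chain with initial distribution `μ` and
transition kernel `κ`.  This is characterized by the finite-dimensional distributions. -/
def IsMarkovMeasureFamily (κ : Kernel S S) (P : Measure S → Measure (ℕ → S)) : Prop :=
  ∀ μ : Measure S, IsProbabilityMeasure μ →
    IsProbabilityMeasure (P μ) ∧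
    ∀ n : ℕ, (P μ).map (fun ω (i : Fin (n + 1)) => ω i.1) = finDist κ μ n

/-- `F B`: the set of runs that visit `B` at some point. -/
def FEv (B : Set S) : Set (ℕ → S) := {ω | ∃ k, ω k ∈ B}

/-- `F^{≤n} B`: the set of runs that visit `B` within `n` steps. -/
def FLe (n : ℕ) (B : Set S) : Set (ℕ → S) := {ω | ∃ k ≤ n, ω k ∈ B}

/-- `B' U B`: runs that stay in `B'` until a first visit to `B`. -/
def Until (B' B : Set S) : Set (ℕ → S) := {ω | ∃ k, ω k ∈ B ∧ ∀ j < k, ω j ∈ B'}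

/-- `B' U^{≤n} B`: runs that stay in `B'` until a first visit to `B`, within `n` steps. -/
def UntilLe (n : ℕ) (B' B : Set S) : Set (ℕ → S) :=
  {ω | ∃ k ≤ n, ω k ∈ B ∧ ∀ j < k, ω j ∈ B'}

/-- `G B`: runs that always stay in `B`. -/
def Glob (B : Set S) : Set (ℕ → S) := {ω | ∀ k, ω k ∈ B}

/-- `GF B`: runs that visit `B` infinitely often. -/
def GlobFEv (B : Set S) : Set (ℕ → S) := {ω | ∀ n : ℕ, ∃ k ≥ n, ω k ∈ B}

/-- The avoid-set `B̃` of `B`: states from which `B` is reached with probability `0`. -/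
def avoidSet (P : Measure S → Measure (ℕ → S)) (B : Set S) : Set S :=
  {s : S | P (Measure.dirac s) (FEv B) = 0}

/-- The STS is decisive w.r.t. `B`: from any initial distribution, almost surely either `B` or
its avoid-set `B̃` is eventually visited. -/
def Decisive (P : Measure S → Measure (ℕ → S)) (B : Set S) : Prop :=
  ∀ μ : Measure S, IsProbabilityMeasure μ → P μ (FEv B ∪ FEv (avoidSet P B)) = 1

/-- `A` is an attractor: it is reached almost surely from any initial distribution. -/
def IsAttractor (P : Measure S → Measure (ℕ → S)) (A : Set S) : Prop :=
  ∀ μ : Measure S, IsProbabilityMeasure μ → P μ (FEv A) = 1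

open Topology

/-! Let `E` be the set of states outside `B ∪ B̃`. By the Markov property, the probability of
staying in `E` up to time `n` and never visiting `B` afterwards is the integral, over the runs that
stayed in `E`, of the probability `stayForeverProb κ Bᶜ` of avoiding `B` from the state at time
`n`; on `E` this probability is at most `1 - p`. Hence `Prob(G E) ≤ (1 - p) Prob(G^{≤n} E)` for
every `n`, and letting `n → ∞` gives `Prob(G E) ≤ (1 - p) Prob(G E)`, i.e. `Prob(G E) = 0`.
The Markov property itself is read off the finite-dimensional distributions by peeling off one
transition at a time. -/

lemma measurable_snoc {n : ℕ} :
    Measurable fun p : (Fin n → S) × S => (Fin.snoc p.1 p.2 : Fin (n + 1) → S) := by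
  refine measurable_pi_lambda _ fun i => ?_
  induction i using Fin.lastCases with
  | last => simpa using measurable_snd
  | cast i => simp only [Fin.snoc_castSucc]; fun_prop

lemma measurable_snoc_left {n : ℕ} (x : Fin n → S) : Measurable (Fin.snoc (α := fun _ => S) x) :=
  measurable_snoc.comp measurable_prodMk_left

lemma measurable_map_snoc (κ : Kernel S S) [IsSFiniteKernel κ] (n : ℕ) :
    Measurable fun x : Fin (n + 1) → S =>
      (κ (x (Fin.last n))).map (Fin.snoc (α := fun _ => S) x) := by
  refine Measure.measurable_of_measurable_coe _ fun T hT => ?_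
  have hlast : Measurable fun x : Fin (n + 1) → S => x (Fin.last n) := measurable_pi_apply _
  simp_rw [Measure.map_apply (measurable_snoc_left _) hT]
  exact Kernel.measurable_kernel_prodMk_left (κ := κ.comap _ hlast) (measurable_snoc hT)

lemma lintegral_finDist_succ (κ : Kernel S S) [IsSFiniteKernel κ] (μ : Measure S) (n : ℕ)
    {g : (Fin (n + 2) → S) → ℝ≥0∞} (hg : Measurable g) :
    ∫⁻ y, g y ∂finDist κ μ (n + 1) =
      ∫⁻ x, ∫⁻ t, g (Fin.snoc x t) ∂κ (x (Fin.last n)) ∂finDist κ μ n := by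
  rw [finDist, Measure.lintegral_bind (measurable_map_snoc κ n).aemeasurable hg.aemeasurable]
  exact lintegral_congr fun x => lintegral_map hg (measurable_snoc_left x)

section StayProb

variable {κ : Kernel S S} {A : Set S}

noncomputable def stepIn (κ : Kernel S S) (A : Set S) (f : S → ℝ≥0∞) (s : S) : ℝ≥0∞ :=
  ∫⁻ t in A, f t ∂κ s

lemma measurable_stepIn [IsSFiniteKernel κ] (hA : MeasurableSet A) {f : S → ℝ≥0∞}
    (hf : Measurable f) : Measurable (stepIn κ A f) :=
  hf.setLIntegral_kernel hA

lemma monotone_stepIn : Monotone (stepIn κ A) :=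
  fun _ _ hfg _ => lintegral_mono fun t => hfg t

/-- The probability that, started at `s`, the chain spends its next `m` steps in `A`
(the state `s` itself is not required to lie in `A`). -/
noncomputable def stayProb (κ : Kernel S S) (A : Set S) (m : ℕ) : S → ℝ≥0∞ :=
  (stepIn κ A)^[m] 1

noncomputable def stayForeverProb (κ : Kernel S S) (A : Set S) (s : S) : ℝ≥0∞ :=
  ⨅ m, stayProb κ A m s

lemma measurable_stayProb [IsSFiniteKernel κ] (hA : MeasurableSet A) (m : ℕ) :
    Measurable (stayProb κ A m) := by
  induction m with
  | zero => exact measurable_const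
  | succ m ih => rw [stayProb, Function.iterate_succ_apply']; exact measurable_stepIn hA ih

lemma antitone_stayProb [IsMarkovKernel κ] : Antitone (stayProb κ A) :=
  monotone_stepIn.antitone_iterate_of_map_le fun _ =>
    (setLIntegral_one A).trans_le prob_le_one

lemma measurable_stayForeverProb [IsSFiniteKernel κ] (hA : MeasurableSet A) :
    Measurable (stayForeverProb κ A) :=
  .iInf fun m => measurable_stayProb hA m

lemma stayForeverProb_le_one (s : S) : stayForeverProb κ A s ≤ 1 :=
  iInf_le _ 0

end StayProb

section Cylinder

variable {α : Type*} {E A : Set α}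

def stayCyl (E A : Set α) (n m : ℕ) : Set (Fin (n + m + 1) → α) :=
  univ.pi fun k => if (k : ℕ) ≤ n then E else A

lemma measurableSet_stayCyl [MeasurableSpace α] (hE : MeasurableSet E) (hA : MeasurableSet A)
    (n m : ℕ) :
    MeasurableSet (stayCyl E A n m) :=
  .univ_pi fun _ => by split_ifs <;> assumption

lemma snoc_mem_stayCyl_succ {n m : ℕ} {x : Fin (n + m + 1) → α} {t : α} :
    (Fin.snoc x t : Fin (n + m + 1 + 1) → α) ∈ stayCyl E A n (m + 1) ↔
      x ∈ stayCyl E A n m ∧ t ∈ A := by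
  simp only [stayCyl, mem_univ_pi]
  change (∀ i : Fin (n + m + 1 + 1), _) ↔ _
  rw [Fin.forall_fin_succ']
  simp only [Fin.snoc_castSucc, Fin.snoc_last, Fin.val_castSucc, Fin.val_last]
  rw [if_neg (by omega)]

lemma preimage_stayCyl (n m : ℕ) :
    (fun (ω : ℕ → α) (i : Fin (n + m + 1)) => ω i.1) ⁻¹' stayCyl E A n m =
      {ω | (∀ k ≤ n, ω k ∈ E) ∧ ∀ k, n < k → k ≤ n + m → ω k ∈ A} := by
  ext ω
  simp only [stayCyl, mem_preimage, mem_univ_pi, mem_ofPred_eq]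
  constructor
  · intro h
    exact ⟨fun k hk => by simpa [hk] using h ⟨k, by omega⟩,
      fun k hnk hkm => by simpa [hnk.not_ge] using h ⟨k, by omega⟩⟩
  · rintro ⟨hωE, hωA⟩ k
    split_ifs with hk
    exacts [hωE k hk, hωA k (by omega) (by omega)]

end Cylinder

lemma setLIntegral_finDist_stayCyl (κ : Kernel S S) [IsSFiniteKernel κ] (μ : Measure S)
    {E A : Set S} (hE : MeasurableSet E) (hA : MeasurableSet A) (n : ℕ) :
    ∀ (m : ℕ) {f : S → ℝ≥0∞}, Measurable f →
      ∫⁻ y in stayCyl E A n m, f (y (Fin.last _)) ∂finDist κ μ (n + m) =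
        ∫⁻ x in stayCyl E A n 0, (stepIn κ A)^[m] f (x (Fin.last n)) ∂finDist κ μ n
  | 0, _, _ => rfl
  | m + 1, f, hf => by
    have hstep (x : Fin (n + m + 1) → S) :
        ∫⁻ t, (stayCyl E A n (m + 1)).indicator (fun y => f (y (Fin.last _))) (Fin.snoc x t)
          ∂κ (x (Fin.last _)) =
        (stayCyl E A n m).indicator (fun x => stepIn κ A f (x (Fin.last _))) x := by
      by_cases hx : x ∈ stayCyl E A n m
      · simp only [indicator_of_mem hx, stepIn, ← lintegral_indicator hA]
        exact lintegral_congr fun t => by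
          by_cases ht : t ∈ A <;> simp [indicator, snoc_mem_stayCyl_succ, hx, ht]
      · simp [indicator, snoc_mem_stayCyl_succ, hx]
    have hg : Measurable ((stayCyl E A n (m + 1)).indicator fun y => f (y (Fin.last _))) :=
      (hf.comp (measurable_pi_apply _)).indicator (measurableSet_stayCyl hE hA n (m + 1))
    rw [← lintegral_indicator (measurableSet_stayCyl hE hA _ _)]
    refine (lintegral_finDist_succ κ μ (n + m) hg).trans ?_
    simp_rw [hstep, lintegral_indicator (measurableSet_stayCyl hE hA _ _)]
    rw [setLIntegral_finDist_stayCyl κ μ hE hA n m (measurable_stepIn hA hf),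
      Function.iterate_succ_apply]

lemma measurableSet_glob {A : Set S} (hA : MeasurableSet A) : MeasurableSet (Glob A) := by
  unfold Glob; measurability

lemma compl_glob_compl {α : Type*} (B : Set α) : (Glob Bᶜ)ᶜ = FEv B := by
  ext; simp [Glob, FEv]

lemma measurableSet_FEv {B : Set S} (hB : MeasurableSet B) : MeasurableSet (FEv B) := by
  unfold FEv; measurability

namespace IsMarkovMeasureFamily

variable {κ : Kernel S S} {P : Measure S → Measure (ℕ → S)} {E A : Set S}

lemma isProbabilityMeasure (hP : IsMarkovMeasureFamily κ P) (μ : Measure S)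
    [hμ : IsProbabilityMeasure μ] : IsProbabilityMeasure (P μ) :=
  (hP μ hμ).1

lemma measure_preimage (hP : IsMarkovMeasureFamily κ P) (μ : Measure S)
    [hμ : IsProbabilityMeasure μ] {N : ℕ} {U : Set (Fin (N + 1) → S)} (hU : MeasurableSet U) :
    P μ ((fun ω (i : Fin (N + 1)) => ω i.1) ⁻¹' U) = finDist κ μ N U := by
  rw [← (hP μ hμ).2 N, Measure.map_apply (by fun_prop) hU]

lemma isProbabilityMeasure_finDist (hP : IsMarkovMeasureFamily κ P) (μ : Measure S)
    [hμ : IsProbabilityMeasure μ] (N : ℕ) : IsProbabilityMeasure (finDist κ μ N) := by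
  have := hP.isProbabilityMeasure μ
  rw [← (hP μ hμ).2 N]
  exact Measure.isProbabilityMeasure_map (Measurable.aemeasurable (by fun_prop))

lemma measure_stay [IsSFiniteKernel κ] (hP : IsMarkovMeasureFamily κ P) (μ : Measure S)
    [IsProbabilityMeasure μ] (hE : MeasurableSet E) (hA : MeasurableSet A) (n m : ℕ) :
    P μ {ω | (∀ k ≤ n, ω k ∈ E) ∧ ∀ k, n < k → k ≤ n + m → ω k ∈ A} =
      ∫⁻ x in stayCyl E A n 0, stayProb κ A m (x (Fin.last n)) ∂finDist κ μ n := by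
  rw [← preimage_stayCyl, hP.measure_preimage μ (measurableSet_stayCyl hE hA n m),
    ← setLIntegral_one]
  exact setLIntegral_finDist_stayCyl κ μ hE hA n m measurable_const

lemma measure_stayForever [IsMarkovKernel κ] (hP : IsMarkovMeasureFamily κ P) (μ : Measure S)
    [IsProbabilityMeasure μ] (hE : MeasurableSet E) (hA : MeasurableSet A) (n : ℕ) :
    P μ {ω | (∀ k ≤ n, ω k ∈ E) ∧ ∀ k, n < k → ω k ∈ A} =
      ∫⁻ x in stayCyl E A n 0, stayForeverProb κ A (x (Fin.last n)) ∂finDist κ μ n := by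
  have := hP.isProbabilityMeasure μ
  have := hP.isProbabilityMeasure_finDist μ n
  have hiInter : {ω : ℕ → S | (∀ k ≤ n, ω k ∈ E) ∧ ∀ k, n < k → ω k ∈ A} =
      ⋂ m, {ω | (∀ k ≤ n, ω k ∈ E) ∧ ∀ k, n < k → k ≤ n + m → ω k ∈ A} := by
    ext ω
    simp only [mem_iInter, mem_ofPred_eq]
    exact ⟨fun h m => ⟨h.1, fun k hk _ => h.2 k hk⟩,
      fun h => ⟨(h 0).1, fun k hk => (h k).2 k hk (by omega)⟩⟩
  have hanti : Antitone fun m =>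
      {ω : ℕ → S | (∀ k ≤ n, ω k ∈ E) ∧ ∀ k, n < k → k ≤ n + m → ω k ∈ A} :=
    fun m m' hm ω h => ⟨h.1, fun k hk hkm => h.2 k hk (by omega)⟩
  have hmeas (m : ℕ) :
      MeasurableSet {ω : ℕ → S | (∀ k ≤ n, ω k ∈ E) ∧ ∀ k, n < k → k ≤ n + m → ω k ∈ A} := by
    measurability
  rw [hiInter, hanti.measure_iInter (fun m => (hmeas m).nullMeasurableSet) ⟨0, measure_ne_top _ _⟩]
  simp_rw [hP.measure_stay μ hE hA n, stayForeverProb]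
  have hmeasq (m : ℕ) : Measurable fun x : Fin (n + 1) → S => stayProb κ A m (x (Fin.last n)) :=
    (measurable_stayProb hA m).comp (measurable_pi_apply _)
  refine (lintegral_iInf hmeasq (fun _ _ hm x => antitone_stayProb hm _) ?_).symm
  simp [stayProb, measure_ne_top]

lemma measure_dirac_glob [IsMarkovKernel κ] (hP : IsMarkovMeasureFamily κ P)
    (hA : MeasurableSet A) (s : S) :
    P (Measure.dirac s) (Glob A) = A.indicator (stayForeverProb κ A) s := by
  classical
  have hglob : Glob A = {ω | (∀ k ≤ 0, ω k ∈ A) ∧ ∀ k, 0 < k → ω k ∈ A} := by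
    ext ω
    exact ⟨fun h => ⟨fun k _ => h k, fun k _ => h k⟩, fun h k => by
      rcases k.eq_zero_or_pos with rfl | hk
      exacts [h.1 0 le_rfl, h.2 k hk]⟩
  have hconst : Measurable fun t : S => fun _ : Fin (0 + 1) => t := by fun_prop
  have hf : Measurable fun x : Fin (0 + 1) → S => stayForeverProb κ A (x (Fin.last 0)) :=
    (measurable_stayForeverProb hA).comp (measurable_pi_apply _)
  have hpre : (fun t : S => fun _ : Fin (0 + 1) => t) ⁻¹' stayCyl A A 0 0 = A := by
    ext; simp [stayCyl]
  rw [hglob, hP.measure_stayForever _ hA hA 0, finDist,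
    setLIntegral_map (measurableSet_stayCyl hA hA 0 0) hf hconst, hpre,
    setLIntegral_dirac' (measurable_stayForeverProb hA) hA, indicator]

lemma measure_dirac_FEv [IsMarkovKernel κ] (hP : IsMarkovMeasureFamily κ P) {B : Set S}
    (hB : MeasurableSet B) (s : S) :
    P (Measure.dirac s) (FEv B) = 1 - Bᶜ.indicator (stayForeverProb κ Bᶜ) s := by
  have := hP.isProbabilityMeasure (Measure.dirac s)
  rw [← compl_glob_compl, prob_compl_eq_one_sub (measurableSet_glob hB.compl),
    hP.measure_dirac_glob hB.compl]

lemma measurableSet_avoidSet [IsMarkovKernel κ] (hP : IsMarkovMeasureFamily κ P) {B : Set S}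
    (hB : MeasurableSet B) : MeasurableSet (avoidSet P B) := by
  have hmeas : Measurable fun s => P (Measure.dirac s) (FEv B) := by
    simp_rw [hP.measure_dirac_FEv hB]
    exact ((measurable_stayForeverProb hB.compl).indicator hB.compl).const_sub 1
  exact hmeas (measurableSet_singleton 0)

lemma measure_glob_eq_zero_of_stayForeverProb_le [IsMarkovKernel κ]
    (hP : IsMarkovMeasureFamily κ P) (μ : Measure S) [IsProbabilityMeasure μ]
    (hE : MeasurableSet E) (hA : MeasurableSet A) (hEA : E ⊆ A)
    {c : ℝ≥0∞} (hc : c < 1) (hbound : ∀ s ∈ E, stayForeverProb κ A s ≤ c) :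
    P μ (Glob E) = 0 := by
  have := hP.isProbabilityMeasure μ
  have hstep (n : ℕ) : P μ (Glob E) ≤ c * P μ {ω | ∀ k ≤ n, ω k ∈ E} := by
    have hprefix : {ω : ℕ → S | ∀ k ≤ n, ω k ∈ E} =
        {ω | (∀ k ≤ n, ω k ∈ E) ∧ ∀ k, n < k → k ≤ n + 0 → ω k ∈ A} := by
      ext ω
      exact ⟨fun h => ⟨h, fun k hk hkn => by omega⟩, And.left⟩
    calc P μ (Glob E)
        ≤ P μ {ω | (∀ k ≤ n, ω k ∈ E) ∧ ∀ k, n < k → ω k ∈ A} :=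
          measure_mono fun ω hω => ⟨fun k _ => hω k, fun k _ => hEA (hω k)⟩
      _ = ∫⁻ x in stayCyl E A n 0, stayForeverProb κ A (x (Fin.last n)) ∂finDist κ μ n :=
          hP.measure_stayForever μ hE hA n
      _ ≤ ∫⁻ _ in stayCyl E A n 0, c ∂finDist κ μ n :=
          setLIntegral_mono measurable_const fun x hx =>
            hbound _ (by simpa using hx (Fin.last n) (mem_univ _))
      _ = c * P μ {ω | ∀ k ≤ n, ω k ∈ E} := by
          rw [setLIntegral_const, hprefix, ← preimage_stayCyl,
            hP.measure_preimage μ (measurableSet_stayCyl hE hA n 0)]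
  have hlim : Tendsto (fun n => P μ {ω | ∀ k ≤ n, ω k ∈ E}) atTop (𝓝 (P μ (Glob E))) := by
    have hiInter : Glob E = ⋂ n, {ω : ℕ → S | ∀ k ≤ n, ω k ∈ E} := by
      ext ω
      simp only [Glob, mem_iInter, mem_ofPred_eq]
      exact ⟨fun h n k _ => h k, fun h k => h k k le_rfl⟩
    rw [hiInter]
    exact tendsto_measure_iInter_atTop (fun n => by measurability)
      (fun n n' hn ω h k hk => h k (hk.trans hn)) ⟨0, measure_ne_top _ _⟩
  have hle : P μ (Glob E) ≤ c * P μ (Glob E) :=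
    ge_of_tendsto' (ENNReal.Tendsto.const_mul hlim (Or.inr (hc.trans one_lt_top).ne)) hstep
  by_contra hne
  have hlt := ENNReal.mul_lt_mul_left hne (measure_ne_top _ _) hc
  rw [one_mul] at hlt
  exact hlt.not_ge hle

end IsMarkovMeasureFamily

/-- If there is `p > 0` such that every state outside the avoid-set `B̃`
reaches `B` with probability at least `p`, then the STS is decisive w.r.t. `B`. -/
theorem decisive_of_uniform_bound_outside_avoidSet
    (κ : Kernel S S) [IsMarkovKernel κ]
    (P : Measure S → Measure (ℕ → S)) (hP : IsMarkovMeasureFamily κ P)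
    (B : Set S) (hB : MeasurableSet B)
    (p : ℝ≥0∞) (hp : 0 < p)
    (hreach : ∀ s ∈ (avoidSet P B)ᶜ, p ≤ P (Measure.dirac s) (FEv B)) :
    Decisive P B := by
  intro μ hμ
  have := hP.isProbabilityMeasure μ
  set E := (B ∪ avoidSet P B)ᶜ
  have hE : MeasurableSet E := (hB.union (hP.measurableSet_avoidSet hB)).compl
  have hbound (s : S) (hs : s ∈ E) : stayForeverProb κ Bᶜ s ≤ 1 - p := by
    rw [mem_compl_iff, mem_union, not_or] at hs
    have hreach_s := hreach s hs.2
    rw [hP.measure_dirac_FEv hB, indicator_of_mem hs.1] at hreach_s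
    calc stayForeverProb κ Bᶜ s
        = 1 - (1 - stayForeverProb κ Bᶜ s) :=
          (ENNReal.sub_sub_cancel one_ne_top (stayForeverProb_le_one s)).symm
      _ ≤ 1 - p := tsub_le_tsub_left hreach_s 1
  have hnull : P μ (Glob E) = 0 :=
    hP.measure_glob_eq_zero_of_stayForeverProb_le μ hE hB.compl (fun s hs h => hs (.inl h))
      (ENNReal.sub_lt_self one_ne_top one_ne_zero hp.ne') hbound
  have hcompl : (FEv B ∪ FEv (avoidSet P B))ᶜ = Glob E := by
    ext; simp [FEv, Glob, E, forall_and]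
  rwa [← prob_compl_eq_zero_iff
    ((measurableSet_FEv hB).union (measurableSet_FEv (hP.measurableSet_avoidSet hB))), hcompl]

end STS
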